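/- arXiv:2306.10939 — 3 statements merged into one kernel-verified Lean document; each statement's English description precedes it below -/
import Mathlib

section
/- The number of weak compositions (c_1,...,c_n) of nonnegative integers satisfying c_{n+1-1}+c_{n+1-2}+...+c_{n+1-j} ≤ j-1 for all j = 1,...,n equals the n-th Catalan number (1/(n+1))·binomial(2n,n). -/
/-!
Relax the ABB condition by a slack `m`, bounding the sum of the last `j` entries by `j - 1 + m`.
Sorting these compositions of length `n + 1` by whether the last entry vanishes gives the
Pascal-type recursion `A(n+1, m+1) = A(n, m+2) + A(n+1, m)`: deleting a vanishing last entry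
adds one unit of slack, and lowering a positive last entry by one removes one. The ballot
numbers `C(2n+m, n) - C(2n+m, n+m+1)` satisfy the same recursion and boundary values, and at
`m = 0` they equal `catalan n`.
-/

open Finset

def abbCompositions (n m : ℕ) : Set (ℕ → ℕ) :=
  {c | (∀ i, i ∉ Icc 1 n → c i = 0) ∧
    ∀ j ∈ Icc 1 n, (∑ i ∈ Icc (n + 1 - j) n, c i) + 1 ≤ j + m}

def ballot (n m : ℕ) : ℤ :=
  ((2 * n + m).choose n : ℤ) - (2 * n + m).choose (n + m + 1)

lemma sum_Icc_succ_sub_succ (c : ℕ → ℕ) (n j : ℕ) :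
    ∑ i ∈ Icc (n + 1 + 1 - (j + 1)) (n + 1), c i =
      ∑ i ∈ Icc (n + 1 - j) n, c i + c (n + 1) := by
  rw [Nat.add_sub_add_right, sum_Icc_succ_top (by omega)]

namespace abbCompositions

lemma zero_left (m : ℕ) : abbCompositions 0 m = {0} := by
  ext c
  refine ⟨fun hc => funext fun i => hc.1 i (by simp), ?_⟩
  rintro rfl
  exact ⟨fun _ _ => rfl, fun j hj => by simp at hj⟩

lemma apply_succ_eq_zero {n m : ℕ} {c : ℕ → ℕ} (hc : c ∈ abbCompositions n m) :
    c (n + 1) = 0 :=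
  hc.1 _ (by simp)

lemma apply_succ_le {n m : ℕ} {c : ℕ → ℕ} (hc : c ∈ abbCompositions (n + 1) m) :
    c (n + 1) ≤ m := by
  have h := hc.2 1 (by simp)
  rw [Nat.add_sub_cancel, Icc_self, sum_singleton] at h
  omega

lemma mem_succ_and_apply_eq_zero_iff {n m : ℕ} {c : ℕ → ℕ} :
    c ∈ abbCompositions (n + 1) m ∧ c (n + 1) = 0 ↔ c ∈ abbCompositions n (m + 1) := by
  constructor
  · rintro ⟨⟨hsupp, hsum⟩, hlast⟩
    refine ⟨fun i hi => ?_, fun j hj => ?_⟩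
    · obtain rfl | hne := eq_or_ne i (n + 1)
      · exact hlast
      · exact hsupp i (by simp only [mem_Icc] at hi ⊢; omega)
    · have h := hsum (j + 1) (by simp only [mem_Icc] at hj ⊢; omega)
      rw [sum_Icc_succ_sub_succ, hlast] at h
      omega
  · intro hc
    have hlast := apply_succ_eq_zero hc
    refine ⟨⟨fun i hi => hc.1 i (by simp only [mem_Icc] at hi ⊢; omega), fun j hj => ?_⟩,
      hlast⟩
    obtain ⟨j, rfl⟩ : ∃ k, j = k + 1 := ⟨j - 1, by simp only [mem_Icc] at hj; omega⟩
    rw [sum_Icc_succ_sub_succ, hlast]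
    obtain rfl | hj0 := j.eq_zero_or_pos
    · simp
    · have h := hc.2 j (by simp only [mem_Icc] at hj ⊢; omega)
      omega

lemma add_single_mem_succ_iff {n m : ℕ} {c : ℕ → ℕ} :
    c + Pi.single (n + 1) 1 ∈ abbCompositions (n + 1) (m + 1) ↔
      c ∈ abbCompositions (n + 1) m := by
  have hsupp : ∀ i ∉ Icc 1 (n + 1), (c + Pi.single (n + 1) 1 : ℕ → ℕ) i = c i := by
    intro i hi
    have hne : i ≠ n + 1 := by rintro rfl; simp at hi
    simp [hne]
  have hsum : ∀ j ∈ Icc 1 (n + 1),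
      ∑ i ∈ Icc (n + 1 + 1 - j) (n + 1), (c + Pi.single (n + 1) 1 : ℕ → ℕ) i =
        ∑ i ∈ Icc (n + 1 + 1 - j) (n + 1), c i + 1 := by
    intro j hj
    have hmem : n + 1 ∈ Icc (n + 1 + 1 - j) (n + 1) := by
      simp only [mem_Icc] at hj ⊢; omega
    simp only [Pi.add_apply, sum_add_distrib, sum_pi_single', if_pos hmem]
  refine and_congr (forall₂_congr fun i hi => by rw [hsupp i hi])
    (forall₂_congr fun j hj => by rw [hsum j hj]; omega)

lemma succ_zero (n : ℕ) : abbCompositions (n + 1) 0 = abbCompositions n 1 := by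
  ext c
  rw [← mem_succ_and_apply_eq_zero_iff]
  exact ⟨fun hc => ⟨hc, Nat.le_zero.mp (apply_succ_le hc)⟩, And.left⟩

lemma succ_succ (n m : ℕ) :
    abbCompositions (n + 1) (m + 1) =
      abbCompositions n (m + 2) ∪ (· + Pi.single (n + 1) 1) '' abbCompositions (n + 1) m := by
  ext c
  constructor
  · intro hc
    by_cases hlast : c (n + 1) = 0
    · exact Or.inl (mem_succ_and_apply_eq_zero_iff.1 ⟨hc, hlast⟩)
    · have hc' : c - Pi.single (n + 1) 1 + Pi.single (n + 1) 1 = c := by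
        ext i
        obtain rfl | hne := eq_or_ne i (n + 1)
        · simp; omega
        · simp [hne]
      refine Or.inr ⟨c - Pi.single (n + 1) 1, ?_, hc'⟩
      rw [← add_single_mem_succ_iff, hc']
      exact hc
  · rintro (hc | ⟨c, hc, rfl⟩)
    · exact (mem_succ_and_apply_eq_zero_iff.2 hc).1
    · exact add_single_mem_succ_iff.2 hc

lemma disjoint_image_add_single (n m : ℕ) :
    Disjoint (abbCompositions n (m + 2))
      ((· + Pi.single (n + 1) 1) '' abbCompositions (n + 1) m) := by
  rw [Set.disjoint_left]
  rintro _ hc ⟨c, -, rfl⟩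
  simpa using apply_succ_eq_zero hc

lemma finite : ∀ n m, (abbCompositions n m).Finite
  | 0, m => by simp [zero_left]
  | n + 1, 0 => by simpa [succ_zero] using finite n 1
  | n + 1, m + 1 => by
    rw [succ_succ]
    exact (finite n (m + 2)).union ((finite (n + 1) m).image _)

lemma ncard_succ_succ (n m : ℕ) :
    (abbCompositions (n + 1) (m + 1)).ncard =
      (abbCompositions n (m + 2)).ncard + (abbCompositions (n + 1) m).ncard := by
  rw [succ_succ, Set.ncard_union_eq (disjoint_image_add_single n m) (finite _ _)
    ((finite _ _).image _), Set.ncard_image_of_injective _ (add_left_injective _)]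

end abbCompositions

namespace ballot

lemma zero_left (m : ℕ) : ballot 0 m = 1 := by
  simp [ballot]

lemma succ_zero (n : ℕ) : ballot (n + 1) 0 = ballot n 1 := by
  rw [ballot, ballot, show 2 * (n + 1) + 0 = 2 * n + 1 + 1 by ring,
    show n + 1 + 0 + 1 = n + 1 + 1 by ring, Nat.choose_succ_succ (2 * n + 1) n,
    Nat.choose_succ_succ (2 * n + 1) (n + 1)]
  push_cast
  ring

lemma succ_succ (n m : ℕ) : ballot (n + 1) (m + 1) = ballot n (m + 2) + ballot (n + 1) m := by
  rw [ballot, ballot, ballot, show 2 * (n + 1) + (m + 1) = 2 * n + m + 2 + 1 by ring,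
    show n + 1 + (m + 1) + 1 = n + m + 2 + 1 by ring, Nat.choose_succ_succ (2 * n + m + 2) n,
    Nat.choose_succ_succ (2 * n + m + 2) (n + m + 2), show 2 * n + (m + 2) = 2 * n + m + 2 by ring,
    show 2 * (n + 1) + m = 2 * n + m + 2 by ring, show n + (m + 2) + 1 = n + m + 2 + 1 by ring,
    show n + 1 + m + 1 = n + m + 2 by ring]
  push_cast
  ring

lemma zero_right (n : ℕ) : ballot n 0 = catalan n := by
  have hcat : ((n + 1) * catalan n : ℕ) = ((2 * n).choose n : ℤ) :=
    congrArg Nat.cast (succ_mul_catalan_eq_centralBinom n)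
  have hratio : ((2 * n).choose (n + 1) * (n + 1) : ℕ) = ((2 * n).choose n * n : ℤ) := by
    have h := Nat.choose_succ_right_eq (2 * n) n
    rw [show 2 * n - n = n by omega] at h
    exact_mod_cast h
  push_cast at hcat hratio
  refine mul_left_cancel₀ (show (n : ℤ) + 1 ≠ 0 by positivity) ?_
  rw [ballot, add_zero, add_zero]
  linear_combination -hratio - hcat

end ballot

theorem abbCompositions.ncard_eq_ballot : ∀ n m, ((abbCompositions n m).ncard : ℤ) = ballot n m
  | 0, m => by simp [zero_left, ballot.zero_left]
  | n + 1, 0 => by rw [succ_zero, ballot.succ_zero, ncard_eq_ballot n 1]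
  | n + 1, m + 1 => by
    rw [ncard_succ_succ, Nat.cast_add, ncard_eq_ballot n (m + 2), ncard_eq_ballot (n + 1) m,
      ballot.succ_succ]

/-- The number of ABB compositions of length `n` (weak compositions
`(c_1,…,c_n)` with `c_n + c_{n-1} + ⋯ + c_{n+1-j} ≤ j-1` for all `j = 1,…,n`)
equals the `n`-th Catalan number. We encode a weak composition of length `n`
as a function `c : ℕ → ℕ` vanishing outside `{1,…,n}`. -/
theorem abb_card_eq_catalan (n : ℕ) :
    {c : ℕ → ℕ |
        (∀ i, i ∉ Finset.Icc 1 n → c i = 0) ∧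
        (∀ j ∈ Finset.Icc 1 n, (∑ i ∈ Finset.Icc (n + 1 - j) n, c i) + 1 ≤ j)}.ncard
      = catalan n := by
  change (abbCompositions n 0).ncard = catalan n
  exact_mod_cast (abbCompositions.ncard_eq_ballot n 0).trans (ballot.zero_right n)
end

section
/- The number of weak compositions (c_1,...,c_n) of nonnegative integers with total sum n-1 satisfying c_n + c_{n-1} + ... + c_{n+1-j} ≤ j-1 for all j = 1,...,n equals the (n-1)-st Catalan number. -/
/-!
Read backwards, the constraint for `j = 1` forces `c_n = 0`, and the remaining entries
`a_k = c_{n-k}` (`k = 1, …, n-1`) have total `n - 1` and partial sums `a_1 + ⋯ + a_k ≤ k`.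
The map `(a_1, …, a_{n-1}) ↦ U D^{a_1} U D^{a_2} ⋯ U D^{a_{n-1}}` turns these sequences into
Dyck words of semilength `n - 1`: the partial-sum bound is exactly the Dyck prefix condition,
and a step word not starting with `D` splits uniquely into blocks `U D^a`.
-/

namespace BallotSequence

open List DyckStep

def toWord (l : List ℕ) : List DyckStep := l.flatMap fun a => U :: replicate a D

@[simp] lemma toWord_nil : toWord [] = [] := rfl

@[simp] lemma toWord_cons (a : ℕ) (l : List ℕ) :
    toWord (a :: l) = U :: (replicate a D ++ toWord l) := rfl

lemma toWord_append (l₁ l₂ : List ℕ) : toWord (l₁ ++ l₂) = toWord l₁ ++ toWord l₂ :=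
  flatMap_append

@[simp] lemma count_U_toWord (l : List ℕ) : (toWord l).count U = l.length := by
  induction l <;> simp [count_replicate, *]

@[simp] lemma count_D_toWord (l : List ℕ) : (toWord l).count D = l.sum := by
  induction l <;> simp [*]

def ofWord : List DyckStep → ℕ × List ℕ
  | [] => (0, [])
  | U :: w => (0, (ofWord w).1 :: (ofWord w).2)
  | D :: w => ((ofWord w).1 + 1, (ofWord w).2)

lemma ofWord_replicate_append (a : ℕ) (l : List ℕ) :
    ofWord (replicate a D ++ toWord l) = (a, l) := by
  induction l generalizing a <;> induction a <;>
    simp_all only [replicate_zero, replicate_succ, nil_append, cons_append, toWord_nil,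
      toWord_cons, ofWord]

def wordEquiv : ℕ × List ℕ ≃ List DyckStep where
  toFun p := replicate p.1 D ++ toWord p.2
  invFun := ofWord
  left_inv p := ofWord_replicate_append p.1 p.2
  right_inv w := by
    induction w with
    | nil => rfl
    | cons s w ih => cases s <;> simpa [ofWord, replicate_succ] using ih

lemma toWord_injective : Function.Injective toWord := fun l₁ l₂ h =>
  congrArg Prod.snd (wordEquiv.injective (a₁ := (0, l₁)) (a₂ := (0, l₂)) (by simpa [wordEquiv]))

lemma exists_toWord_eq {w : List DyckStep} (hw : w.head? ≠ some D) : ∃ l, toWord l = w := by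
  obtain ⟨⟨a, l⟩, rfl⟩ := wordEquiv.surjective w
  cases a with
  | zero => exact ⟨l, rfl⟩
  | succ a => simp [wordEquiv, replicate_succ] at hw

def PrefixSumsBounded (l : List ℕ) : Prop := ∀ k, (l.take k).sum ≤ k

lemma count_D_take_toWord_le {l : List ℕ} {c : ℕ} (h : ∀ k, (l.take k).sum ≤ k + c) (i : ℕ) :
    ((toWord l).take i).count D ≤ ((toWord l).take i).count U + c := by
  -- the slack `c` makes the induction go through: after a block `U D^a` it becomes `c + 1 - a`
  induction l generalizing c i with
  | nil => simp
  | cons a l ih =>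
    have ha : a ≤ 1 + c := by simpa using h 1
    have hl : ∀ k, (l.take k).sum ≤ k + (c + 1 - a) := fun k => by
      have := h (k + 1)
      simp only [take_succ_cons, sum_cons] at this
      omega
    cases i with
    | zero => simp
    | succ i =>
      have := ih hl (i - a)
      simp only [toWord_cons, take_succ_cons, take_append, take_replicate, length_replicate,
        count_cons, count_append, count_replicate, beq_iff_eq, reduceCtorEq, if_true,
        if_false] at *
      omega

lemma prefixSumsBounded_iff {l : List ℕ} : PrefixSumsBounded l ↔
    ∀ i, ((toWord l).take i).count D ≤ ((toWord l).take i).count U := by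
  refine ⟨fun h => count_D_take_toWord_le (c := 0) h, fun h k => ?_⟩
  have hprefix : (toWord l).take (toWord (l.take k)).length = toWord (l.take k) := by
    have := take_left (l₁ := toWord (l.take k)) (l₂ := toWord (l.drop k))
    rwa [← toWord_append, take_append_drop] at this
  have := h (toWord (l.take k)).length
  rw [hprefix, count_D_toWord, count_U_toWord] at this
  exact this.trans (length_take_le k l)

def toDyckWord (l : List ℕ) (hsum : l.sum = l.length) (hl : PrefixSumsBounded l) : DyckWord where
  toList := toWord l
  count_U_eq_count_D := by simp [hsum]
  count_D_le_count_U := prefixSumsBounded_iff.mp hl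

def ballotLists (m : ℕ) : Set (List ℕ) := {l | l.length = m ∧ l.sum = m ∧ PrefixSumsBounded l}

theorem ncard_ballotLists (m : ℕ) : (ballotLists m).ncard = catalan m := by
  have hcard : {p : DyckWord | p.semilength = m}.ncard = catalan m := by
    rw [← Nat.card_coe_set_eq, Set.coe_ofPred, Nat.card_eq_fintype_card,
      DyckWord.card_dyckWord_semilength_eq_catalan]
  rw [← hcard]
  refine Set.ncard_congr (fun l hl => toDyckWord l (hl.2.1.trans hl.1.symm) hl.2.2) ?_ ?_ ?_
  · rintro l ⟨hlen, -, -⟩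
    exact (count_U_toWord l).trans hlen
  · intro l₁ l₂ _ _ h
    exact toWord_injective (congrArg DyckWord.toList h)
  · intro p hp
    have hhead : p.toList.head? ≠ some D := by
      intro hD
      obtain ⟨w, hw⟩ := head?_eq_some_iff.mp hD
      simpa [hw] using p.count_D_le_count_U 1
    obtain ⟨l, hl⟩ := exists_toWord_eq hhead
    have hlen : l.length = m := by rw [← count_U_toWord, hl]; exact hp
    have hsum : l.sum = m := by rw [← count_D_toWord, hl, ← p.count_U_eq_count_D]; exact hp
    refine ⟨l, ⟨hlen, hsum, prefixSumsBounded_iff.mpr (hl ▸ p.count_D_le_count_U)⟩, ?_⟩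
    exact DyckWord.ext hl

section Compositions

open Finset

def revList (m : ℕ) (c : ℕ → ℕ) : List ℕ := (List.range m).map fun j => c (m - j)

@[simp] lemma length_revList (m : ℕ) (c : ℕ → ℕ) : (revList m c).length = m := by
  simp [revList]

lemma getElem?_revList {m i : ℕ} (c : ℕ → ℕ) (hi : i ∈ Icc 1 m) :
    (revList m c)[m - i]? = some (c i) := by
  rw [mem_Icc] at hi
  simp [revList, show m - i < m by omega, show m - (m - i) = i by omega]

lemma sum_take_revList (c : ℕ → ℕ) {m k : ℕ} (hk : k ≤ m) :
    ((revList m c).take k).sum = ∑ i ∈ Icc (m + 1 - k) m, c i := by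
  have hrange : ((List.range k).map fun j => c (m - j)).sum = ∑ j ∈ range k, c (m - j) := by
    simp [sum_eq_multiset_sum, Multiset.range]
  rw [revList, ← map_take, take_range, min_eq_left hk, hrange]
  refine sum_nbij' (m - ·) (m - ·) ?_ ?_ ?_ ?_ fun _ _ => rfl <;>
    intro i hi <;> simp only [Finset.mem_range, mem_Icc] at hi ⊢ <;> omega

lemma sum_revList (c : ℕ → ℕ) (m : ℕ) : (revList m c).sum = ∑ i ∈ Icc 1 m, c i := by
  simpa [take_of_length_le] using sum_take_revList c (le_refl m)

lemma revList_mem_ballotLists_iff {m : ℕ} {c : ℕ → ℕ} : revList m c ∈ ballotLists m ↔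
    ∑ i ∈ Icc 1 m, c i = m ∧ ∀ k ≤ m, ∑ i ∈ Icc (m + 1 - k) m, c i ≤ k := by
  simp only [ballotLists, Set.mem_ofPred_eq, length_revList, true_and, sum_revList,
    PrefixSumsBounded, and_congr_right_iff]
  intro hsum
  refine ⟨fun h k hk => sum_take_revList c hk ▸ h k, fun h k => ?_⟩
  rcases le_or_gt k m with hk | hk
  · exact sum_take_revList c hk ▸ h k hk
  · rw [take_of_length_le (by simpa using hk.le), sum_revList, hsum]
    exact hk.le

def topCompositions (n : ℕ) : Set (ℕ → ℕ) :=
  {c : ℕ → ℕ |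
    (∀ i, i ∉ Finset.Icc 1 n → c i = 0) ∧
    (∑ i ∈ Finset.Icc 1 n, c i) = n - 1 ∧
    (∀ j ∈ Finset.Icc 1 n, (∑ i ∈ Finset.Icc (n + 1 - j) n, c i) + 1 ≤ j)}

lemma topCompositions_zero : topCompositions 0 = {0} := by
  ext c
  simp [topCompositions, funext_iff]

lemma mem_topCompositions_succ_iff {m : ℕ} {c : ℕ → ℕ} :
    c ∈ topCompositions (m + 1) ↔ (∀ i ∉ Icc 1 m, c i = 0) ∧ revList m c ∈ ballotLists m := by
  have hfull : ∑ i ∈ Icc 1 (m + 1), c i = ∑ i ∈ Icc 1 m, c i + c (m + 1) :=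
    sum_Icc_succ_top (by omega) c
  have htail (k : ℕ) (hk : k ≤ m) : ∑ i ∈ Icc (m + 1 + 1 - (k + 1)) (m + 1), c i =
      ∑ i ∈ Icc (m + 1 - k) m, c i + c (m + 1) := by
    rw [Nat.add_sub_add_right, sum_Icc_succ_top (by omega)]
  simp only [topCompositions, Set.mem_ofPred_eq, revList_mem_ballotLists_iff, mem_Icc,
    Nat.add_sub_cancel, hfull]
  constructor
  · rintro ⟨hsupp, hsum, hle⟩
    have htop : c (m + 1) = 0 := by simpa using hle 1 (by omega)
    refine ⟨fun i hi => ?_, by omega, fun k hk => ?_⟩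
    · rcases eq_or_ne i (m + 1) with rfl | hne
      · exact htop
      · exact hsupp i (by omega)
    · have := hle (k + 1) (by omega)
      rw [htail k hk] at this
      omega
  · rintro ⟨hsupp, hsum, hle⟩
    have htop : c (m + 1) = 0 := hsupp _ (by omega)
    refine ⟨fun i hi => hsupp i (by omega), by omega, fun j hj => ?_⟩
    obtain ⟨k, rfl⟩ : ∃ k, j = k + 1 := ⟨j - 1, by omega⟩
    rw [htail k (by omega)]
    have := hle k (by omega)
    omega

theorem ncard_topCompositions_succ (m : ℕ) :
    (topCompositions (m + 1)).ncard = (ballotLists m).ncard := by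
  refine Set.ncard_congr (fun c _ => revList m c)
    (fun c hc => (mem_topCompositions_succ_iff.mp hc).2) ?_ ?_
  · intro c₁ c₂ hc₁ hc₂ h
    funext i
    by_cases hi : i ∈ Icc 1 m
    · simpa [getElem?_revList _ hi] using congrArg (·[m - i]?) h
    · rw [(mem_topCompositions_succ_iff.mp hc₁).1 i hi,
        (mem_topCompositions_succ_iff.mp hc₂).1 i hi]
  · intro l hl
    set c : ℕ → ℕ := fun i => if i ∈ Icc 1 m then l.getD (m - i) 0 else 0
    have hc : revList m c = l := by
      refine ext_getElem (by rw [length_revList, hl.1]) fun j hj hjl => ?_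
      rw [length_revList] at hj
      simp [revList, c, show 1 ≤ m - j by omega, show m - (m - j) = j by omega, hjl]
    exact ⟨c, mem_topCompositions_succ_iff.mpr ⟨fun i hi => if_neg hi, hc ▸ hl⟩, hc⟩

end Compositions

end BallotSequence

open BallotSequence in
theorem abb_top_card_eq_catalan_general (n : ℕ) :
    {c : ℕ → ℕ |
        (∀ i, i ∉ Finset.Icc 1 n → c i = 0) ∧
        (∑ i ∈ Finset.Icc 1 n, c i) = n - 1 ∧
        (∀ j ∈ Finset.Icc 1 n, (∑ i ∈ Finset.Icc (n + 1 - j) n, c i) + 1 ≤ j)}.ncard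
      = catalan (n - 1) := by
  change (topCompositions n).ncard = _
  cases n with
  | zero => simp [topCompositions_zero]
  | succ m => rw [ncard_topCompositions_succ, ncard_ballotLists, Nat.add_sub_cancel]

/-- The number of weak compositions `(c_1,…,c_n)` of total sum `n-1`
satisfying `c_n + c_{n-1} + ⋯ + c_{n+1-j} ≤ j-1` for all `j = 1,…,n` equals the
`(n-1)`-st Catalan number. -/
theorem abb_top_card_eq_catalan (n : ℕ) (hn : 1 ≤ n) :
    {c : ℕ → ℕ |
        (∀ i, i ∉ Finset.Icc 1 n → c i = 0) ∧
        (∑ i ∈ Finset.Icc 1 n, c i) = n - 1 ∧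
        (∀ j ∈ Finset.Icc 1 n, (∑ i ∈ Finset.Icc (n + 1 - j) n, c i) + 1 ≤ j)}.ncard
      = catalan (n - 1) :=
  abb_top_card_eq_catalan_general n
end

section
/- Every finitely supported sequence of nonnegative integers indexed by the positive integers can be written uniquely as a concatenation of blocks, where each block of length i is a maximal-weight ABB composition of length i (i.e., a weak composition (c_1,...,c_i) with sum i-1 satisfying the partial-sum conditions c_i + ... + c_{i+1-j} ≤ j-1 for all j ≤ i). -/
/-!
Write `a i = c (i + 1)` and call `m - (a 0 + ⋯ + a (m - 1))` the excess at position `m`.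
It starts at `0`, rises by at most one per step, and is unbounded because `a` has finite
support. Rewriting the suffix conditions through the total sum, a list is a maximal-weight
ABB composition iff its sum is one less than its length and each proper prefix of length `m`
has sum at least `m`. So a slice of `a` is a block exactly when the excess ends one above its
starting value and never exceeds that value before. Hence in any decomposition into blocks
the `k`-th boundary is the first position where the excess reaches `k`, and cutting at these
first passage times does give a decomposition.
-/

/-- Maximal-weight ABB compositions. -/
def IsABBtop (l : List ℕ) : Prop :=
  l ≠ [] ∧ l.sum + 1 = l.length ∧
    ∀ j, 1 ≤ j → j ≤ l.length → (l.drop (l.length - j)).sum + 1 ≤ j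

theorem isABBtop_iff_prefix_sums (l : List ℕ) :
    IsABBtop l ↔ l.sum + 1 = l.length ∧ ∀ m < l.length, m ≤ (l.take m).sum := by
  refine ⟨fun ⟨_, hsum, hsuffix⟩ => ⟨hsum, fun m hm => ?_⟩, fun ⟨hsum, hprefix⟩ => ⟨?_, hsum, ?_⟩⟩
  · have := hsuffix (l.length - m) (by omega) (Nat.sub_le _ _)
    have := l.sum_take_add_sum_drop m
    rw [Nat.sub_sub_self hm.le] at *
    omega
  · rintro rfl
    simp at hsum
  · intro j hj hjl
    have := hprefix (l.length - j) (by omega)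
    have := l.sum_take_add_sum_drop (l.length - j)
    omega

namespace NatSeq

section

variable {α : Type*} (a : ℕ → α)

def slice (p L : ℕ) : List α := (List.range L).map fun i => a (p + i)

@[simp]
theorem length_slice (p L : ℕ) : (slice a p L).length = L := by
  simp [slice]

theorem map_range_add (p L : ℕ) :
    (List.range (p + L)).map a = (List.range p).map a ++ slice a p L := by
  simp [slice, List.range_add, Function.comp_def]

theorem take_slice (p : ℕ) {m L : ℕ} (h : m ≤ L) : (slice a p L).take m = slice a p m := by
  simp [slice, ← List.map_take, List.take_range, min_eq_left h]

theorem flatten_map_range_succ (B : ℕ → List α) (n : ℕ) :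
    ((List.range (n + 1)).map B).flatten = ((List.range n).map B).flatten ++ B n := by
  simp [List.range_succ]

theorem flatten_eq_prefix_iff (B : ℕ → List α) :
    (∀ n, ((List.range n).map B).flatten
        = (List.range ((List.range n).map B).flatten.length).map a) ↔
      ∀ n, B n = slice a ((List.range n).map B).flatten.length (B n).length := by
  constructor
  · intro h n
    have hsucc := h (n + 1)
    rw [flatten_map_range_succ, List.length_append, map_range_add, ← h n] at hsucc
    exact List.append_cancel_left hsucc
  · intro h n
    induction n with
    | zero => simp
    | succ n ih =>
      rw [flatten_map_range_succ, List.length_append, map_range_add, ← ih, ← h n]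

end

variable (a : ℕ → ℕ)

def excess (m : ℕ) : ℤ := m - ((List.range m).map a).sum

theorem excess_add (p L : ℕ) : excess a (p + L) = excess a p + L - (slice a p L).sum := by
  simp only [excess, map_range_add, List.sum_append]
  push_cast
  ring

theorem excess_succ_le (m : ℕ) : excess a (m + 1) ≤ excess a m + 1 := by
  have := excess_add a m 1
  simp only [slice, List.range_one, List.map_cons, List.map_nil, List.sum_singleton] at this
  omega

theorem isABBtop_slice_iff (p L : ℕ) :
    IsABBtop (slice a p L) ↔
      excess a (p + L) = excess a p + 1 ∧ ∀ m < L, excess a (p + m) ≤ excess a p := by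
  rw [isABBtop_iff_prefix_sums, length_slice]
  refine and_congr ?_ (forall₂_congr fun m hm => ?_)
  · rw [excess_add]
    omega
  · rw [take_slice a p hm.le, excess_add]
    omega

theorem exists_le_excess_of_eventually_zero {N : ℕ} (h : ∀ i, N ≤ i → a i = 0) (k : ℕ) :
    ∃ m, (k : ℤ) ≤ excess a m := by
  refine ⟨N + (k + ((List.range N).map a).sum), ?_⟩
  have hzero : (slice a N (k + ((List.range N).map a).sum)).sum = 0 :=
    List.sum_eq_zero fun x hx => by
      obtain ⟨i, -, rfl⟩ := List.mem_map.1 hx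
      exact h _ (Nat.le_add_right N i)
  rw [excess_add, hzero, excess]
  push_cast
  omega

variable {a} (hunb : ∀ k : ℕ, ∃ m, (k : ℤ) ≤ excess a m)

def reachTime (k : ℕ) : ℕ := Nat.find (hunb k)

theorem excess_lt_of_lt_reachTime {k m : ℕ} (h : m < reachTime hunb k) : excess a m < k :=
  not_le.1 (Nat.find_min (hunb k) h)

theorem reachTime_eq_of {k P : ℕ} (hreach : (k : ℤ) ≤ excess a P)
    (hbefore : ∀ m < P, excess a m < k) : reachTime hunb k = P :=
  (Nat.find_eq_iff (hunb k)).2 ⟨hreach, fun m hm => not_le.2 (hbefore m hm)⟩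

theorem reachTime_zero : reachTime hunb 0 = 0 :=
  reachTime_eq_of hunb (by simp [excess]) fun _ h => absurd h (Nat.not_lt_zero _)

-- The excess rises by at most one per step, so it cannot overshoot `k`.
theorem excess_reachTime (k : ℕ) : excess a (reachTime hunb k) = k := by
  refine le_antisymm ?_ (Nat.find_spec (hunb k))
  rcases h : reachTime hunb k with _ | m
  · simp [excess]
  · have := excess_lt_of_lt_reachTime hunb (show m < reachTime hunb k by omega)
    have := excess_succ_le a m
    omega

theorem reachTime_lt_succ (k : ℕ) : reachTime hunb k < reachTime hunb (k + 1) := by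
  by_contra! hle
  have := excess_reachTime hunb (k + 1)
  rcases hle.lt_or_eq with hlt | heq
  · have := excess_lt_of_lt_reachTime hunb hlt
    omega
  · rw [heq, excess_reachTime] at this
    omega

theorem reachTime_eq_of_passages {P : ℕ → ℕ} (h0 : P 0 = 0)
    (hstep : ∀ k, excess a (P (k + 1)) = excess a (P k) + 1)
    (hbelow : ∀ k m, P k ≤ m → m < P (k + 1) → excess a m ≤ excess a (P k)) (k : ℕ) :
    reachTime hunb k = P k := by
  have key : ∀ k, excess a (P k) = k ∧ ∀ m < P k, excess a m < k := by
    intro k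
    induction k with
    | zero => simp [h0, excess]
    | succ k ih =>
      refine ⟨by rw [hstep, ih.1]; push_cast; rfl, fun m hm => ?_⟩
      rcases lt_or_ge m (P k) with hlt | hge
      · have := ih.2 m hlt
        omega
      · have := hbelow k m hge hm
        omega
  exact reachTime_eq_of hunb (key k).1.ge (key k).2

theorem isABBtop_blocks_iff (B : ℕ → List ℕ) :
    ((∀ k, IsABBtop (B k)) ∧ ∀ n, ((List.range n).map B).flatten
        = (List.range ((List.range n).map B).flatten.length).map a) ↔
      ∀ k, B k = slice a (reachTime hunb k) (reachTime hunb (k + 1) - reachTime hunb k) := by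
  rw [flatten_eq_prefix_iff]
  set P : ℕ → ℕ := fun n => ((List.range n).map B).flatten.length
  have hP : ∀ k, P (k + 1) = P k + (B k).length := fun k => by
    simp only [P, flatten_map_range_succ, List.length_append]
  constructor
  · rintro ⟨hblock, hslice⟩ k
    have hpass : ∀ k, excess a (P (k + 1)) = excess a (P k) + 1 ∧
        ∀ m < (B k).length, excess a (P k + m) ≤ excess a (P k) := fun k => by
      rw [hP, ← isABBtop_slice_iff, ← hslice]
      exact hblock k
    have hreach := reachTime_eq_of_passages hunb (P := P) (by simp [P])
      (fun k => (hpass k).1)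
      (fun k m hm hm' => by
        simpa [Nat.add_sub_cancel' hm] using (hpass k).2 (m - P k) (by rw [hP] at hm'; omega))
    rw [hslice, hreach, hreach, hP, Nat.add_sub_cancel_left]
  · intro hB
    have hreach : ∀ k, P k = reachTime hunb k := fun k => by
      induction k with
      | zero => simp [P, reachTime_zero]
      | succ k ih =>
        rw [hP, ih, hB, length_slice, Nat.add_sub_cancel' (reachTime_lt_succ hunb k).le]
    refine ⟨fun k => ?_, fun k => ?_⟩
    · rw [hB, isABBtop_slice_iff, Nat.add_sub_cancel' (reachTime_lt_succ hunb k).le,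
        excess_reachTime, excess_reachTime]
      refine ⟨by push_cast; rfl, fun m hm => ?_⟩
      have := excess_lt_of_lt_reachTime hunb (k := k + 1) (m := reachTime hunb k + m) (by omega)
      push_cast at this
      omega
    · change B k = slice a (P k) _
      rw [hreach, hB, length_slice]

end NatSeq

/-- Every finitely supported sequence `c : ℕ → ℕ` (indexed by the
positive integers, i.e. the value of the vector at position `i ≥ 1` is `c i`)
can be written uniquely as the concatenation of a sequence of blocks
`B 0, B 1, B 2, …`, each of which is a maximal-weight ABB composition;
concatenation is expressed by saying that for every `n`, the join of the first
`n` blocks is the corresponding initial segment of the sequence `(c 1, c 2, …)`. -/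
theorem abb_block_decomposition (c : ℕ → ℕ) (hfin : ∃ N, ∀ i, N ≤ i → c i = 0) :
    ∃! B : ℕ → List ℕ,
      (∀ k, IsABBtop (B k)) ∧
      ∀ n, ((List.range n).map B).flatten
          = (List.range (((List.range n).map B).flatten.length)).map (fun i => c (i + 1)) := by
  obtain ⟨N, hN⟩ := hfin
  have hunb := NatSeq.exists_le_excess_of_eventually_zero (fun i => c (i + 1)) (N := N)
    fun i hi => hN (i + 1) (by omega)
  have hblocks := NatSeq.isABBtop_blocks_iff hunb
  exact ⟨_, (hblocks _).2 fun _ => rfl, fun B hB => funext ((hblocks B).1 hB)⟩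
end
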